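/- arXiv:1511.00233 — 4 statements merged into one kernel-verified Lean document; each statement's English description precedes it below -/
import Mathlib

section
/- Let v ∈ ℓ²(ℤ) (or any countable index set) and suppose its nonincreasing rearrangement (v_n^*) satisfies |v_n^*| ≤ M n^{-(1-t/d)/2} exp(-η ω^{-t/d} n^{t/d}) for all n ≥ 1, with constants M, η, ω > 0 and 0 < t ≤ d. Then for every ε ∈ (0, M] the minimal number N of terms needed so that the best N-term approximation error (ℓ²-tail of the rearrangement) is at most ε satisfies N ≤ ω (η^{-1} log(C M/ε))^{d/t} + 1 for a constant C depending only on η, t, d, ω. -/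
/-!
Put `s = t / d ∈ (0, 1]` and `a = η ω^(-s)`, so that the hypothesis reads
`v_n² ≤ M² n^(s-1) e^(-2a n^s)`. Bernoulli's inequality (concavity of `x ↦ x^s`) gives
`2as n^(s-1) e^(-2a n^s) ≤ e^(-2a (n-1)^s) - e^(-2a n^s)`, so the tail beyond `N` telescopes to
at most `M² / (2as) · e^(-2a N^s)`. Choosing `N = ⌈x⌉` with `a x^s = log (C M / ε)` makes the
square root of the tail at most `ε` once `C ≥ (2as)^(-1/2)`; `C ≥ 1` keeps the logarithm nonnegative.
-/

open Real Finset

lemma mul_rpow_sub_one_le_rpow_sub_rpow_sub_one {x s : ℝ} (hx : 1 ≤ x) (hs₀ : 0 ≤ s)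
    (hs₁ : s ≤ 1) : s * x ^ (s - 1) ≤ x ^ s - (x - 1) ^ s := by
  have hx₀ : 0 < x := one_pos.trans_le hx
  have hx_inv : x⁻¹ ≤ 1 := inv_le_one_of_one_le₀ hx
  have hfactor : (x - 1) ^ s = x ^ s * (1 + -x⁻¹) ^ s := by
    rw [← mul_rpow hx₀.le (by linarith)]
    congr 1
    field_simp
    ring
  have hBernoulli : (1 + -x⁻¹) ^ s ≤ 1 + s * -x⁻¹ :=
    rpow_one_add_le_one_add_mul_self (by linarith) hs₀ hs₁
  have := mul_le_mul_of_nonneg_left hBernoulli (rpow_nonneg hx₀.le s)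
  rw [hfactor, rpow_sub_one hx₀.ne']
  linarith [show x ^ s * (1 + s * -x⁻¹) = x ^ s - s * (x ^ s / x) by ring]

lemma mul_rpow_sub_one_mul_exp_le_exp_sub_exp {c s x : ℝ} (hc : 0 ≤ c) (hx : 1 ≤ x)
    (hs₀ : 0 ≤ s) (hs₁ : s ≤ 1) :
    c * s * x ^ (s - 1) * exp (-c * x ^ s) ≤ exp (-c * (x - 1) ^ s) - exp (-c * x ^ s) := by
  set δ := x ^ s - (x - 1) ^ s
  have hδ : c * (s * x ^ (s - 1)) ≤ c * δ :=
    mul_le_mul_of_nonneg_left (mul_rpow_sub_one_le_rpow_sub_rpow_sub_one hx hs₀ hs₁) hc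
  have hsplit : exp (-c * (x - 1) ^ s) = exp (c * δ) * exp (-c * x ^ s) := by
    rw [← exp_add]
    congr 1
    ring
  rw [hsplit]
  nlinarith [add_one_le_exp (c * δ), exp_pos (-c * x ^ s)]

lemma tsum_ite_lt_le_of_le_sub {f g : ℕ → ℝ} (N : ℕ) (hf : ∀ n, 0 ≤ f n) (hg : ∀ n, 0 ≤ g n)
    (h : ∀ n, N ≤ n → f (n + 1) ≤ g n - g (n + 1)) :
    ∑' n, (if N < n then f n else 0) ≤ g N := by
  set F : ℕ → ℝ := fun n ↦ if N < n then f n else 0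
  have hF : ∀ n, 0 ≤ F n := fun n ↦ by
    simp only [F]
    split_ifs
    exacts [hf n, le_rfl]
  have hpartial : ∀ k, ∑ i ∈ range (N + 1 + k), F i ≤ g N - g (N + k) := by
    intro k
    induction k with
    | zero =>
      rw [add_zero, sum_eq_zero fun i hi ↦ if_neg (by rw [mem_range] at hi; omega), add_zero, sub_self]
    | succ k ih =>
      rw [show N + 1 + (k + 1) = N + 1 + k + 1 by omega, sum_range_succ,
        show N + (k + 1) = N + k + 1 by omega]
      have hnext : F (N + 1 + k) = f (N + k + 1) := by
        simp only [F, Nat.add_right_comm, if_pos (show N < N + k + 1 by omega)]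
      linarith [h (N + k) (by omega)]
  refine Real.tsum_le_of_sum_range_le hF fun m ↦ ?_
  calc ∑ i ∈ range m, F i ≤ ∑ i ∈ range (N + 1 + m), F i :=
        sum_le_sum_of_subset_of_nonneg (range_subset_range.2 (by omega)) fun i _ _ ↦ hF i
    _ ≤ g N - g (N + m) := hpartial m
    _ ≤ g N := by linarith [hg (N + m)]

lemma sq_le_of_abs_le_rpow_mul_exp {y M b s x : ℝ} (hx : 0 ≤ x)
    (h : |y| ≤ M * x ^ (-((1 - s) / 2)) * exp (b * x ^ s)) :
    y ^ 2 ≤ M ^ 2 * x ^ (s - 1) * exp (2 * b * x ^ s) := by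
  have hsq : (M * x ^ (-((1 - s) / 2)) * exp (b * x ^ s)) ^ 2
      = M ^ 2 * x ^ (s - 1) * exp (2 * b * x ^ s) := by
    rw [mul_pow, mul_pow, ← rpow_mul_natCast hx, ← exp_nat_mul]
    push_cast
    ring_nf
  rw [← hsq, ← sq_abs]
  exact pow_le_pow_left₀ (abs_nonneg y) h 2

lemma sqrt_tsum_ite_lt_sq_le {v : ℕ → ℝ} {M a s : ℝ} (hM : 0 ≤ M) (ha : 0 < a) (hs₀ : 0 < s)
    (hs₁ : s ≤ 1)
    (hv : ∀ n : ℕ, 1 ≤ n → |v n| ≤ M * (n : ℝ) ^ (-((1 - s) / 2)) * exp (-a * (n : ℝ) ^ s))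
    (N : ℕ) :
    √(∑' n, if N < n then v n ^ 2 else 0) ≤ M / √(2 * a * s) * exp (-a * (N : ℝ) ^ s) := by
  set g : ℕ → ℝ := fun n ↦ M ^ 2 / (2 * a * s) * exp (-(2 * a) * (n : ℝ) ^ s)
  have hstep : ∀ n : ℕ, v (n + 1) ^ 2 ≤ g n - g (n + 1) := by
    intro n
    have hn : (1 : ℝ) ≤ (n + 1 : ℕ) := by simp
    have hsq := sq_le_of_abs_le_rpow_mul_exp (by positivity) (hv (n + 1) (by omega))
    have htel := mul_rpow_sub_one_mul_exp_le_exp_sub_exp (c := 2 * a) (by positivity) hn hs₀.le hs₁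
    simp only [Nat.cast_add_one, add_sub_cancel_right, mul_neg] at hsq htel
    calc v (n + 1) ^ 2 ≤ M ^ 2 * ((n : ℝ) + 1) ^ (s - 1) * exp (-(2 * a) * ((n : ℝ) + 1) ^ s) :=
          hsq
      _ = M ^ 2 / (2 * a * s) *
          (2 * a * s * ((n : ℝ) + 1) ^ (s - 1) * exp (-(2 * a) * ((n : ℝ) + 1) ^ s)) := by
          field_simp
      _ ≤ M ^ 2 / (2 * a * s) *
          (exp (-(2 * a) * (n : ℝ) ^ s) - exp (-(2 * a) * ((n : ℝ) + 1) ^ s)) := by gcongr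
      _ = g n - g (n + 1) := by
          simp only [g, Nat.cast_add_one]
          ring
  have htail := tsum_ite_lt_le_of_le_sub N (fun n ↦ sq_nonneg (v n))
    (fun n ↦ by positivity) fun n _ ↦ hstep n
  calc √(∑' n, if N < n then v n ^ 2 else 0) ≤ √(g N) := sqrt_le_sqrt htail
    _ = M / √(2 * a * s) * exp (-a * (N : ℝ) ^ s) := by
      rw [← sqrt_sq (by positivity : 0 ≤ M / √(2 * a * s) * exp (-a * (N : ℝ) ^ s))]
      congr 1
      have : exp (-(2 * a) * (N : ℝ) ^ s) = exp (-a * (N : ℝ) ^ s) ^ 2 := by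
        rw [← exp_nat_mul]; ring_nf
      simp only [g, this]
      field_simp
      rw [sq_sqrt (by positivity)]
      ring

lemma mul_rpow_neg_mul_mul_rpow_inv {η ω L s : ℝ} (hη : 0 < η) (hω : 0 < ω) (hL : 0 ≤ L)
    (hs : s ≠ 0) : η * ω ^ (-s) * (ω * (η⁻¹ * L) ^ s⁻¹) ^ s = L := by
  rw [mul_rpow hω.le (by positivity), ← rpow_mul (by positivity), inv_mul_cancel₀ hs, rpow_one,
    rpow_neg hω.le]
  field_simp

/-- for a sequence whose nonincreasing rearrangement `v` (indexed by `n ≥ 1`)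
lies in the exponential (Gevrey) sparsity class, the minimal number `N` of terms needed for
the ℓ²-tail to be at most `ε` satisfies `N ≤ ω (η⁻¹ log (C M / ε))^(d/t) + 1`. -/
theorem stmt_7 (η ω d t : ℝ) (hη : 0 < η) (hω : 0 < ω) (ht0 : 0 < t) (htd : t ≤ d) :
    ∃ C > 0, ∀ (M : ℝ) (v : ℕ → ℝ), 0 < M →
      (∀ n : ℕ, 1 ≤ n →
        |v n| ≤ M * (n : ℝ) ^ (-((1 - t / d) / 2)) *
          Real.exp (-η * ω ^ (-(t / d)) * (n : ℝ) ^ (t / d))) →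
      (∀ n : ℕ, |v (n + 1)| ≤ |v n|) →
      Summable (fun n : ℕ => (v n) ^ 2) →
      ∀ ε : ℝ, 0 < ε → ε ≤ M →
        ∃ N : ℕ,
          Real.sqrt (∑' n : ℕ, if N < n then (v n) ^ 2 else 0) ≤ ε ∧
          (N : ℝ) ≤ ω * (η⁻¹ * Real.log (C * M / ε)) ^ (d / t) + 1 := by
  have hd : 0 < d := ht0.trans_le htd
  set s := t / d
  have hs₀ : 0 < s := div_pos ht0 hd
  set a := η * ω ^ (-s)
  have ha : 0 < a := by positivity
  refine ⟨max (√(2 * a * s))⁻¹ 1, by positivity, fun M v hM hv _ _ ε hε hεM ↦ ?_⟩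
  set C := max (√(2 * a * s))⁻¹ 1
  have hC : 0 < C := lt_max_of_lt_right one_pos
  have hCM : 1 ≤ C * M / ε := by
    rw [le_div_iff₀ hε]
    nlinarith [le_max_right (√(2 * a * s))⁻¹ 1]
  set L := log (C * M / ε)
  have hL : 0 ≤ L := log_nonneg hCM
  set x := ω * (η⁻¹ * L) ^ (d / t)
  have hx : 0 ≤ x := by positivity
  refine ⟨⌈x⌉₊, ?_, (Nat.ceil_lt_add_one hx).le⟩
  have hLN : L ≤ a * (⌈x⌉₊ : ℝ) ^ s := by
    rw [← mul_rpow_neg_mul_mul_rpow_inv hη hω hL hs₀.ne', inv_div]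
    gcongr
    exact Nat.le_ceil x
  calc √(∑' n, if ⌈x⌉₊ < n then v n ^ 2 else 0)
      ≤ M / √(2 * a * s) * exp (-a * (⌈x⌉₊ : ℝ) ^ s) :=
        sqrt_tsum_ite_lt_sq_le hM.le ha hs₀ ((div_le_one hd).2 htd)
          (fun n hn ↦ by simpa only [neg_mul] using hv n hn) _
    _ ≤ M * C * exp (-L) := by
        rw [div_eq_mul_inv]
        gcongr
        · exact le_max_left _ _
        · linarith
    _ = ε := by
        rw [exp_neg, exp_log (by positivity)]
        field_simp [hC.ne']
end

section
/- Let r ∈ ℓ²(K) with r ≠ 0 and θ ∈ (0,1). Let Λ' be a finite subset of K obtained greedily (picking indices of largest modulus) of minimal cardinality such that Σ_{k∈Λ'} |r_k|² ≥ θ² Σ_{k∈K} |r_k|². Then ‖r - P_{Λ'} r‖ ≤ sqrt(1-θ²) ‖r‖, and moreover Λ' achieves the minimal cardinality among all subsets satisfying the Dörfler property. -/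
/-! The tail bound is the Dörfler inequality for `Λ'` subtracted from the total mass. Minimality
is an exchange argument: in a set `Λ''` with fewer elements than `Λ'`, replace the elements outside
`Λ'` by as many elements of `Λ' \ Λ''`; since `Λ'` holds the largest entries, the mass does not
drop, and the result is a proper subset of `Λ'` still satisfying the Dörfler property. -/

open Finset

theorem Summable.tsum_ite_mem_zero {K α : Type*} [DecidableEq K] [AddCommGroup α]
    [TopologicalSpace α] [IsTopologicalAddGroup α] [T2Space α] {f : K → α} (hf : Summable f)
    (s : Finset K) : ∑' k, (if k ∈ s then 0 else f k) = ∑' k, f k - ∑ k ∈ s, f k := by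
  rw [← hf.sum_add_tsum_compl (s := s), add_sub_cancel_left, _root_.tsum_subtype]
  congr 1 with k
  by_cases hk : k ∈ s <;> simp [hk]

section Exchange

variable {K M : Type*} [AddCommMonoid M] [LinearOrder M] [IsOrderedAddMonoid M] {w : K → M}

theorem Finset.sum_le_sum_of_card_eq_of_forall_le {A B : Finset K} (hcard : #A = #B)
    (hle : ∀ a ∈ A, ∀ b ∈ B, w a ≤ w b) : ∑ a ∈ A, w a ≤ ∑ b ∈ B, w b := by
  rcases B.eq_empty_or_nonempty with rfl | hB
  · simp_all
  obtain ⟨b₀, hb₀, hmin⟩ := B.exists_min_image w hB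
  calc ∑ a ∈ A, w a ≤ #A • w b₀ := sum_le_card_nsmul _ _ _ fun a ha => hle a ha b₀ hb₀
    _ = #B • w b₀ := by rw [hcard]
    _ ≤ ∑ b ∈ B, w b := card_nsmul_le_sum _ _ _ hmin

variable [DecidableEq K]

theorem exists_subset_card_eq_sum_le_of_forall_le {s t : Finset K}
    (hgreedy : ∀ k ∈ s, ∀ m ∉ s, w m ≤ w k) (hcard : #t ≤ #s) :
    ∃ u ⊆ s, #u = #t ∧ ∑ k ∈ t, w k ≤ ∑ k ∈ u, w k := by
  have hcard_sdiff : #(t \ s) ≤ #(s \ t) := by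
    have := card_inter_add_card_sdiff t s
    have := card_inter_add_card_sdiff s t
    rw [inter_comm s t] at this
    omega
  obtain ⟨B, hBs, hB⟩ := exists_subset_card_eq hcard_sdiff
  have hdisj : Disjoint (t ∩ s) B := disjoint_left.mpr fun a ha haB =>
    (mem_sdiff.mp (hBs haB)).2 (mem_inter.mp ha).1
  have hswap : ∑ k ∈ t \ s, w k ≤ ∑ k ∈ B, w k :=
    sum_le_sum_of_card_eq_of_forall_le hB.symm fun a ha b hb =>
      hgreedy b (mem_sdiff.mp (hBs hb)).1 a (mem_sdiff.mp ha).2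
  refine ⟨t ∩ s ∪ B, union_subset inter_subset_right (hBs.trans sdiff_subset), ?_, ?_⟩
  · rw [card_union_of_disjoint hdisj, hB, card_inter_add_card_sdiff]
  · rw [sum_union hdisj, ← sum_inter_add_sum_sdiff t s]
    gcongr

end Exchange

theorem stmt_10_general {K : Type*} [DecidableEq K] (r : K → ℝ) (θ : ℝ)
    (hsum : Summable (fun k => (r k) ^ 2))
    (Λ' : Finset K)
    (hgreedy : ∀ k ∈ Λ', ∀ m ∉ Λ', (r m) ^ 2 ≤ (r k) ^ 2)
    (hdorfler : θ ^ 2 * ∑' k, (r k) ^ 2 ≤ ∑ k ∈ Λ', (r k) ^ 2)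
    (hminimal : ∀ Λ'' ⊂ Λ', ∑ k ∈ Λ'', (r k) ^ 2 < θ ^ 2 * ∑' k, (r k) ^ 2) :
    Real.sqrt (∑' k, if k ∈ Λ' then 0 else (r k) ^ 2) ≤
        Real.sqrt (1 - θ ^ 2) * Real.sqrt (∑' k, (r k) ^ 2) ∧
      ∀ Λ'' : Finset K, θ ^ 2 * ∑' k, (r k) ^ 2 ≤ ∑ k ∈ Λ'', (r k) ^ 2 →
        Λ'.card ≤ Λ''.card := by
  constructor
  · rw [hsum.tsum_ite_mem_zero, ← Real.sqrt_mul' _ (tsum_nonneg fun k => sq_nonneg (r k))]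
    exact Real.sqrt_le_sqrt (by linarith)
  · intro Λ'' hΛ''
    by_contra! hlt
    obtain ⟨u, huΛ', hu, hle⟩ := exists_subset_card_eq_sum_le_of_forall_le hgreedy hlt.le
    have hssub : u ⊂ Λ' := ssubset_of_subset_of_ne huΛ' (by rintro rfl; omega)
    linarith [hminimal u hssub]

/-- Dörfler marking by a greedy choice of minimal cardinality.
`Λ'` contains the largest entries of `r`, captures a `θ²` fraction of the total
`ℓ²`-mass, and no proper subset does.  Then the tail satisfies
`‖r - P_{Λ'} r‖ ≤ sqrt(1-θ²) ‖r‖`, and `Λ'` has minimal cardinality among all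
subsets with the Dörfler property. -/
theorem stmt_10 {K : Type*} [DecidableEq K] (r : K → ℝ) (θ : ℝ)
    (hθ0 : 0 < θ) (hθ1 : θ < 1)
    (hsum : Summable (fun k => (r k) ^ 2))
    (hne : ∃ k, r k ≠ 0)
    (Λ' : Finset K)
    (hgreedy : ∀ k ∈ Λ', ∀ m ∉ Λ', (r m) ^ 2 ≤ (r k) ^ 2)
    (hdorfler : θ ^ 2 * ∑' k, (r k) ^ 2 ≤ ∑ k ∈ Λ', (r k) ^ 2)
    (hminimal : ∀ Λ'' ⊂ Λ', ∑ k ∈ Λ'', (r k) ^ 2 < θ ^ 2 * ∑' k, (r k) ^ 2) :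
    Real.sqrt (∑' k, if k ∈ Λ' then 0 else (r k) ^ 2) ≤
        Real.sqrt (1 - θ ^ 2) * Real.sqrt (∑' k, (r k) ^ 2) ∧
      ∀ Λ'' : Finset K, θ ^ 2 * ∑' k, (r k) ^ 2 ≤ ∑ k ∈ Λ'', (r k) ^ 2 →
        Λ'.card ≤ Λ''.card :=
  stmt_10_general r θ hsum Λ' hgreedy hdorfler hminimal
end

section
/- Let r ∈ ℓ²(K), θ ∈ (0,1), and let Λ' ⊆ K satisfy ‖r - P_{Λ'} r‖ ≤ sqrt(1-θ²)‖r‖ with |Λ'| minimal among all sets with this Dörfler property. If r belongs to the exponential class with ‖r‖_{ℓ_G^{η,t}} ≤ M (i.e., E_N^*(r) ≤ M exp(-η ω^{-t/d} N^{t/d})), then |Λ'| ≤ ω ((1/η) log(M/(sqrt(1-θ²)‖r‖)))^{d/t} + 1. -/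
/-! The element `r` is not yet `sqrt(1-θ²)‖r‖`-approximated with `|Λ'| - 1` terms, so the class
bound at `N = |Λ'| - 1` gives `sqrt(1-θ²)‖r‖ < M exp(-η (N/ω)^{t/d})`; taking logarithms and
inverting the stretched exponential bounds `N`. -/

open Real

lemma lt_log_div_of_lt_mul_exp {s M a : ℝ} (hs : 0 < s) (hM : 0 < M)
    (h : s < M * exp (-a)) : a < log (M / s) := by
  rw [lt_log_iff_exp_lt (div_pos hM hs), lt_div_iff₀ hs]
  rwa [exp_neg, ← div_eq_mul_inv, lt_div_iff₀ (exp_pos a), mul_comm] at h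

lemma lt_mul_rpow_inv_of_stretched_exp_lt {N η ω p L : ℝ} (hN : 0 ≤ N) (hη : 0 < η)
    (hω : 0 < ω) (hp : 0 < p) (h : η * ω ^ (-p) * N ^ p < L) :
    N < ω * ((1 / η) * L) ^ p⁻¹ := by
  have hNω : (N / ω) ^ p = ω ^ (-p) * N ^ p := by
    rw [div_rpow hN hω.le, rpow_neg hω.le, div_eq_inv_mul]
  have hL : (N / ω) ^ p < (1 / η) * L := by
    rw [hNω, one_div, ← div_eq_inv_mul, lt_div_iff₀ hη, mul_comm, ← mul_assoc]
    exact h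
  have hL0 : 0 ≤ (1 / η) * L := (rpow_nonneg (div_nonneg hN hω.le) p).trans hL.le
  rw [← div_lt_iff₀' hω]
  exact (lt_rpow_inv_iff_of_pos (div_nonneg hN hω.le) hL0 hp).mpr hL

theorem stmt_11_general (Es : ℕ → ℝ) (R M η ω d t θ : ℝ) (n : ℕ)
    (hη : 0 < η) (hω : 0 < ω) (ht0 : 0 < t) (htd : t ≤ d)
    (hM : 0 < M) (hR : 0 < R) (hθ0 : 0 < θ) (hθ1 : θ < 1)
    (hclass : ∀ N : ℕ, Es N ≤ M * Real.exp (-η * ω ^ (-(t / d)) * (N : ℝ) ^ (t / d)))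
    (hn : 1 ≤ n)
    (hmin : Real.sqrt (1 - θ ^ 2) * R < Es (n - 1)) :
    (n : ℝ) ≤ ω * ((1 / η) * Real.log (M / (Real.sqrt (1 - θ ^ 2) * R))) ^ (d / t) + 1 := by
  have hs : 0 < sqrt (1 - θ ^ 2) * R := mul_pos (sqrt_pos.mpr (by nlinarith)) hR
  have hlog := lt_log_div_of_lt_mul_exp hs hM <| by
    simpa only [neg_mul] using hmin.trans_le (hclass (n - 1))
  have hbound := lt_mul_rpow_inv_of_stretched_exp_lt (Nat.cast_nonneg _) hη hω
    (div_pos ht0 (ht0.trans_le htd)) hlog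
  rw [inv_div, Nat.cast_sub hn, Nat.cast_one] at hbound
  linarith

/-- cardinality bound for Dörfler marking of a residual in the exponential
class.  `Es N` denotes the best `N`-term approximation error of `r`, `R = ‖r‖ > 0`, and
`n = |Λ'|` is minimal with `E^*_{n}(r) ≤ sqrt(1-θ²) R`, so that `E^*_{n-1}(r)` exceeds
`sqrt(1-θ²) R`.  Then `n ≤ ω ((1/η) log(M / (sqrt(1-θ²) R)))^{d/t} + 1`. -/
theorem stmt_11 (Es : ℕ → ℝ) (R M η ω d t θ : ℝ) (n : ℕ)
    (hη : 0 < η) (hω : 0 < ω) (ht0 : 0 < t) (htd : t ≤ d)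
    (hM : 0 < M) (hR : 0 < R) (hθ0 : 0 < θ) (hθ1 : θ < 1)
    (hclass : ∀ N : ℕ, Es N ≤ M * Real.exp (-η * ω ^ (-(t / d)) * (N : ℝ) ^ (t / d)))
    (hn : 1 ≤ n)
    (hach : Es n ≤ Real.sqrt (1 - θ ^ 2) * R)
    (hmin : Real.sqrt (1 - θ ^ 2) * R < Es (n - 1)) :
    (n : ℝ) ≤ ω * ((1 / η) * Real.log (M / (Real.sqrt (1 - θ ^ 2) * R))) ^ (d / t) + 1 :=
  stmt_11_general Es R M η ω d t θ n hη hω ht0 htd hM hR hθ0 hθ1 hclass hn hmin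
end

section
/- Let V be a Hilbert space with energy norm |||·||| satisfying sqrt(α_*)‖v‖_V ≤ |||v||| ≤ sqrt(α^*)‖v‖_V, and suppose residual norms satisfy (β_*/sqrt(α^*))‖r(u_Λ)‖_* ≤ |||u - u_Λ||| ≤ (β^*/sqrt(α_*))‖r(u_Λ)‖_* for all Galerkin solutions u_Λ. If the algorithm guarantees |||u - u_{n+1}||| ≤ 2(β^*/sqrt(α_*)) sqrt(1-θ_n²) ‖r_n‖_* and the marking parameter is chosen dynamically via sqrt(1-θ_n²) = C_0 ‖r_n‖_*/‖r_0‖_* with C_0 ≤ (1/4) sqrt(α_*/α^*)(β_*/β^*), then ‖r_{n+1}‖_*/(2‖r_0‖_*) ≤ (‖r_n‖_*/(2‖r_0‖_*))² for all n ≥ 0. -/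
/-!
With `c_* = β_*/√α^*` and `c^* = β^*/√α_*` the constants of the lower and upper residual bounds,
the bound on `C_0` says exactly `C_0 ≤ c_*/(4 c^*)`. Chaining the lower bound at step `n + 1`
with the algorithm's error bound and the dynamic choice of `θ_n` gives
`c_* r_{n+1} ≤ 2 c^* C_0 r_n² / r_0 ≤ c_* r_n² / (2 r_0)`, i.e. `r_{n+1} ≤ r_n² / (2 r_0)`,
which is the claim after dividing by `2 r_0`.
-/

theorem Real.sqrt_div_mul_div_eq_div_div {a b c d : ℝ} (ha : 0 ≤ a) :
    √(a / b) * (c / d) = (c / √b) / (d / √a) := by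
  rw [Real.sqrt_div ha, div_div_eq_mul_div]
  ring

theorem le_sq_div_two_mul_of_mul_le {cl cu C0 r0 x y : ℝ} (hcl : 0 < cl) (hcu : 0 < cu)
    (hr0 : 0 < r0) (hC0 : C0 ≤ 1 / 4 * (cl / cu))
    (h : cl * x ≤ 2 * cu * (C0 * y / r0) * y) :
    x ≤ y ^ 2 / (2 * r0) := by
  refine le_of_mul_le_mul_left ?_ hcl
  calc cl * x ≤ 2 * cu * (C0 * y / r0) * y := h
    _ = 2 * cu * C0 * (y ^ 2 / r0) := by ring
    _ ≤ 2 * cu * (1 / 4 * (cl / cu)) * (y ^ 2 / r0) := by gcongr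
    _ = cl * (y ^ 2 / (2 * r0)) := by field_simp; ring

theorem div_le_div_sq_of_le_sq_div {r0 x y : ℝ} (hr0 : 0 < r0) (h : x ≤ y ^ 2 / (2 * r0)) :
    x / (2 * r0) ≤ (y / (2 * r0)) ^ 2 := by
  calc x / (2 * r0) ≤ y ^ 2 / (2 * r0) / (2 * r0) := by gcongr
    _ = (y / (2 * r0)) ^ 2 := by rw [div_pow, div_div, sq (2 * r0)]

/-- Here `e n = |||u - u_n|||` and `r n = ‖r_n‖_*`. -/
theorem stmt_12_general (e r θ : ℕ → ℝ) (αs αb βs βb C0 : ℝ)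
    (hαs : 0 < αs) (hαsb : αs ≤ αb) (hβs : 0 < βs) (hβsb : βs ≤ βb)
    (hr0 : 0 < r 0)
    (hlow : ∀ n : ℕ, (βs / Real.sqrt αb) * r n ≤ e n)
    (halg : ∀ n : ℕ, e (n + 1) ≤ 2 * (βb / Real.sqrt αs) * Real.sqrt (1 - (θ n) ^ 2) * r n)
    (hdyn : ∀ n : ℕ, Real.sqrt (1 - (θ n) ^ 2) = C0 * r n / r 0)
    (hC0 : C0 ≤ (1 / 4) * Real.sqrt (αs / αb) * (βs / βb)) :
    ∀ n : ℕ, r (n + 1) / (2 * r 0) ≤ (r n / (2 * r 0)) ^ 2 := by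
  intro n
  have hαb : 0 < αb := hαs.trans_le hαsb
  have hβb : 0 < βb := hβs.trans_le hβsb
  have hC0' : C0 ≤ 1 / 4 * ((βs / √αb) / (βb / √αs)) := by
    rwa [← Real.sqrt_div_mul_div_eq_div_div hαs.le, ← mul_assoc]
  have hstep := (hlow (n + 1)).trans (halg n)
  rw [hdyn n] at hstep
  exact div_le_div_sq_of_le_sq_div hr0
    (le_sq_div_two_mul_of_mul_le (by positivity) (by positivity) hr0 hC0' hstep)

/-- quadratic convergence of the residuals of DYN-GAL.
`e n = |||u - u_n|||` and `r n = ‖r_n‖_*`; the marking parameter is chosen dynamically. -/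
theorem stmt_12 (e r θ : ℕ → ℝ) (αs αb βs βb C0 : ℝ)
    (hαs : 0 < αs) (hαsb : αs ≤ αb) (hβs : 0 < βs) (hβsb : βs ≤ βb)
    (hr0 : 0 < r 0) (hrpos : ∀ n : ℕ, 0 ≤ r n)
    (hlow : ∀ n : ℕ, (βs / Real.sqrt αb) * r n ≤ e n)
    (hup : ∀ n : ℕ, e n ≤ (βb / Real.sqrt αs) * r n)
    (halg : ∀ n : ℕ, e (n + 1) ≤ 2 * (βb / Real.sqrt αs) * Real.sqrt (1 - (θ n) ^ 2) * r n)
    (hdyn : ∀ n : ℕ, Real.sqrt (1 - (θ n) ^ 2) = C0 * r n / r 0)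
    (hC0 : C0 ≤ (1 / 4) * Real.sqrt (αs / αb) * (βs / βb)) :
    ∀ n : ℕ, r (n + 1) / (2 * r 0) ≤ (r n / (2 * r 0)) ^ 2 :=
  stmt_12_general e r θ αs αb βs βb C0 hαs hαsb hβs hβsb hr0 hlow halg hdyn hC0
end
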